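/- arXiv:1405.6618 — 3 statements merged into one kernel-verified Lean document; each statement's English description precedes it below -/
import Mathlib

section
/- For every nonnegative integer n and complex number x such that no denominator vanishes, the sum over k from 0 to n of ((3x)_k (1-3x)_k (-n)_k) / (k! (1/2)_k (-3n)_k) * (3/4)^k equals ((1/3 + x)_n (2/3 - x)_n) / ((1/3)_n (2/3)_n). (Gosper's first 3F2(3/4) identity.) -/
/-!
Both sides `s n` satisfy `(1/3 + n) (2/3 + n) s (n + 1) = (1/3 + x + n) (2/3 - x + n) s n` and equal
`1` at `n = 0`. For the quotient of Pochhammer symbols this is immediate. For the sum it comes from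
creative telescoping (Zeilberger's algorithm): with `F n k` the summand and the certificate
`G n (k + 1) = -(3x + k) (1 - 3x + k) / 9 * F n k`, `G n 0 = 0`,
  `(1/3 + n) (2/3 + n) F (n + 1) k - (1/3 + x + n) (2/3 - x + n) F n k = G n (k + 1) - G n k`,
which becomes an identity of rational functions once `F n (k + 1)` and `F (n + 1) (k + 1)` are
written as rational multiples of `F n k`. Summing over `k` telescopes, since `F n (n + 1) = 0`.
-/

/-- Pochhammer symbol (rising factorial) `(a)_k`. -/
noncomputable def poch (a : ℂ) (k : ℕ) : ℂ := ∏ j ∈ Finset.range k, (a + j)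

open Finset

theorem add_natCast_ne_zero {a : ℂ} (ha : 0 < a.re) (n : ℕ) : a + n ≠ 0 :=
  ne_of_apply_ne Complex.re <| by
    rw [Complex.add_re, Complex.natCast_re, Complex.zero_re]
    exact (add_pos_of_pos_of_nonneg ha n.cast_nonneg).ne'

theorem poch_zero (a : ℂ) : poch a 0 = 1 := prod_range_zero _

theorem poch_succ (a : ℂ) (k : ℕ) : poch a (k + 1) = poch a k * (a + k) :=
  prod_range_succ _ _

theorem poch_add (a : ℂ) (m k : ℕ) : poch a (m + k) = poch a m * poch (a + m) k := by
  simp only [poch, prod_range_add, Nat.cast_add, add_assoc]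

theorem poch_succ' (a : ℂ) (k : ℕ) : poch a (k + 1) = a * poch (a + 1) k := by
  rw [add_comm, poch_add, poch_succ, poch_zero, Nat.cast_one, Nat.cast_zero, add_zero, one_mul]

theorem poch_neg_natCast_eq_zero {m k : ℕ} (h : m < k) : poch (-(m : ℂ)) k = 0 :=
  prod_eq_zero (mem_range.2 h) (neg_add_cancel _)

theorem poch_mul_poch_div_poch_mul_poch_succ (a b c d : ℂ) (n : ℕ) :
    poch a (n + 1) * poch b (n + 1) / (poch c (n + 1) * poch d (n + 1)) =
      poch a n * poch b n / (poch c n * poch d n) * ((a + n) * (b + n) / ((c + n) * (d + n))) := by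
  simp only [poch_succ, div_eq_mul_inv, mul_inv]
  ring

theorem poch_neg_div_poch_neg_three_mul_succ {n j : ℕ} (hj : j ≤ 3 * n) :
    poch (-((n + 1 : ℕ) : ℂ)) (j + 1) / poch (-(3 * ((n + 1 : ℕ) : ℂ))) (j + 1) =
      poch (-(n : ℂ)) j / poch (-(3 * n : ℂ)) j *
        ((3*n + 1 - j) * (3*n + 2 - j) / (3 * ((3*n + 1) * (3*n + 2)))) := by
  have hN : poch (-((n + 1 : ℕ) : ℂ)) (j + 1) = -(n + 1) * poch (-(n : ℂ)) j := by
    rw [poch_succ']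
    push_cast
    ring_nf
  have h1 : 3 * n + 1 - (j : ℂ) ≠ 0 := sub_ne_zero.2 (by exact_mod_cast (by omega : 3 * n + 1 ≠ j))
  have h2 : 3 * n + 2 - (j : ℂ) ≠ 0 := sub_ne_zero.2 (by exact_mod_cast (by omega : 3 * n + 2 ≠ j))
  have hQ : poch (-(3 * ((n + 1 : ℕ) : ℂ))) (j + 1) =
      -(3 * (n + 1)) * ((3*n + 1) * (3*n + 2)) * poch (-(3 * n : ℂ)) j /
        ((3*n + 1 - j) * (3*n + 2 - j)) := by
    rw [eq_div_iff (mul_ne_zero h1 h2)]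
    -- both sides are `(a)_(j+3)` for `a = -3(n+1)`, split as `(a)_(j+1) (a+j+1)_2` and `(a)_3 (a+3)_j`
    have h := (poch_add (-(3 * ((n + 1 : ℕ) : ℂ))) (j + 1) 2).symm.trans
      ((congrArg _ (by ring)).trans (poch_add _ 3 j))
    rw [show -(3 * ((n + 1 : ℕ) : ℂ)) + ((3 : ℕ) : ℂ) = -(3 * n) by push_cast; ring] at h
    simp only [poch_succ, poch_zero] at h ⊢
    push_cast at h ⊢
    linear_combination h
  have hn : (n + 1 : ℂ) ≠ 0 := Nat.cast_add_one_ne_zero n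
  have h3 : (3 * n + 1 : ℂ) ≠ 0 := by exact_mod_cast Nat.succ_ne_zero (3 * n)
  have h4 : (3 * n + 2 : ℂ) ≠ 0 := by exact_mod_cast Nat.succ_ne_zero (3 * n + 1)
  rw [hN, hQ]
  field_simp

noncomputable def gosperTerm (x : ℂ) (n k : ℕ) : ℂ :=
  (poch (3*x) k * poch (1 - 3*x) k * poch (-(n : ℂ)) k) /
    ((Nat.factorial k : ℂ) * poch (1/2) k * poch (-(3*n : ℂ)) k) * (3/4 : ℂ)^k

noncomputable def gosperCertificate (x : ℂ) (n : ℕ) : ℕ → ℂ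
  | 0 => 0
  | j + 1 => -(3*x + j) * (1 - 3*x + j) / 9 * gosperTerm x n j

theorem gosperTerm_eq_mul (x : ℂ) (n k : ℕ) :
    gosperTerm x n k = poch (3*x) k * poch (1 - 3*x) k / ((Nat.factorial k : ℂ) * poch (1/2) k) *
      (3/4 : ℂ)^k * (poch (-(n : ℂ)) k / poch (-(3*n : ℂ)) k) := by
  simp only [gosperTerm, div_eq_mul_inv, mul_inv]
  ring

theorem gosperTerm_eq_zero_of_lt (x : ℂ) {n k : ℕ} (h : n < k) : gosperTerm x n k = 0 := by
  simp [gosperTerm, poch_neg_natCast_eq_zero h]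

theorem gosperTerm_succ (x : ℂ) (n j : ℕ) :
    gosperTerm x n (j + 1) = gosperTerm x n j *
      (3/4 * ((3*x + j) * (1 - 3*x + j) * (-n + j)) / ((j + 1) * (1/2 + j) * (-(3*n) + j))) := by
  simp only [gosperTerm, poch_succ, Nat.factorial_succ, Nat.cast_mul, Nat.cast_succ, pow_succ,
    div_eq_mul_inv, mul_inv]
  ring

theorem gosperTerm_succ_succ (x : ℂ) {n j : ℕ} (hj : j ≤ 3 * n) :
    gosperTerm x (n + 1) (j + 1) = gosperTerm x n j *
      ((3*x + j) * (1 - 3*x + j) * ((3*n + 1 - j) * (3*n + 2 - j)) /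
        (4 * (j + 1) * (1/2 + j) * ((3*n + 1) * (3*n + 2)))) := by
  rw [gosperTerm_eq_mul, gosperTerm_eq_mul, poch_neg_div_poch_neg_three_mul_succ hj]
  simp only [poch_succ, Nat.factorial_succ, Nat.cast_mul, Nat.cast_succ, pow_succ,
    div_eq_mul_inv, mul_inv]
  ring

theorem gosperTerm_telescoping (x : ℂ) {n k : ℕ} (hk : k ≤ 3 * n) :
    (1/3 + n) * (2/3 + n) * gosperTerm x (n + 1) k - (1/3 + x + n) * (2/3 - x + n) * gosperTerm x n k
      = gosperCertificate x n (k + 1) - gosperCertificate x n k := by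
  rcases k with _ | j
  · simp only [gosperTerm, gosperCertificate, poch_zero]
    push_cast
    ring
  have h1 : (j + 1 : ℂ) ≠ 0 := Nat.cast_add_one_ne_zero j
  have h2 : (1 + 2 * j : ℂ) ≠ 0 := by exact_mod_cast (by omega : 1 + 2 * j ≠ 0)
  have h3 : (-(3 * n) + j : ℂ) ≠ 0 := by
    rw [neg_add_eq_sub]
    exact sub_ne_zero.2 (by exact_mod_cast (by omega : j ≠ 3 * n))
  have h4 : (3 * n + 1 : ℂ) ≠ 0 := by exact_mod_cast Nat.succ_ne_zero (3 * n)
  have h5 : (3 * n + 2 : ℂ) ≠ 0 := by exact_mod_cast Nat.succ_ne_zero (3 * n + 1)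
  simp only [gosperCertificate]
  rw [gosperTerm_succ_succ x (by omega), gosperTerm_succ]
  push_cast
  field_simp
  ring

theorem gosperSum_recurrence (x : ℂ) (n : ℕ) :
    (1/3 + n) * (2/3 + n) * ∑ k ∈ range (n + 2), gosperTerm x (n + 1) k
      = (1/3 + x + n) * (2/3 - x + n) * ∑ k ∈ range (n + 1), gosperTerm x n k := by
  rcases n.eq_zero_or_pos with rfl | hn
  -- outside the range `k ≤ 3 n` of `gosperTerm_telescoping`, so checked by hand
  · simp only [gosperTerm, sum_range_succ, sum_range_zero, poch_succ, poch_zero,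
      Nat.factorial_one, Nat.factorial_zero]
    norm_num
    ring
  have htel := sum_range_sub (gosperCertificate x n) (n + 2)
  rw [← sum_congr rfl fun k hk => gosperTerm_telescoping x (by rw [mem_range] at hk; omega),
    sum_sub_distrib, ← mul_sum, ← mul_sum, sum_range_succ (gosperTerm x n)] at htel
  simpa [gosperCertificate, gosperTerm_eq_zero_of_lt x (Nat.lt_succ_self n), sub_eq_zero] using htel

theorem gosper_first_3F2_general (n : ℕ) (x : ℂ) :
    ∑ k ∈ Finset.range (n+1),
      (poch (3*x) k * poch (1 - 3*x) k * poch (-(n : ℂ)) k) /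
        ((Nat.factorial k : ℂ) * poch (1/2) k * poch (-(3*n : ℂ)) k) * (3/4 : ℂ)^k
      = (poch (1/3 + x) n * poch (2/3 - x) n) / (poch (1/3) n * poch (2/3) n) := by
  change ∑ k ∈ range (n + 1), gosperTerm x n k = _
  induction n with
  | zero => simp [gosperTerm, poch_zero]
  | succ n ih =>
    have hc : (1/3 + n : ℂ) * (2/3 + n) ≠ 0 :=
      mul_ne_zero (add_natCast_ne_zero (by norm_num) n) (add_natCast_ne_zero (by norm_num) n)
    apply mul_left_cancel₀ hc
    rw [gosperSum_recurrence, ih, poch_mul_poch_div_poch_mul_poch_succ, mul_left_comm,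
      mul_div_cancel₀ _ hc, mul_comm]

theorem gosper_first_3F2 (n : ℕ) (x : ℂ)
    (hden : ∀ k ≤ n, poch (1/2) k ≠ 0 ∧ poch (-(3*n : ℂ)) k ≠ 0)
    (h13 : poch (1/3) n ≠ 0) (h23 : poch (2/3) n ≠ 0) :
    ∑ k ∈ Finset.range (n+1),
      (poch (3*x) k * poch (1 - 3*x) k * poch (-(n : ℂ)) k) /
        ((Nat.factorial k : ℂ) * poch (1/2) k * poch (-(3*n : ℂ)) k) * (3/4 : ℂ)^k
      = (poch (1/3 + x) n * poch (2/3 - x) n) / (poch (1/3) n * poch (2/3) n) :=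
  gosper_first_3F2_general n x
end

section
/- For every nonnegative integer n and complex numbers q, x such that no denominator vanishes, the sum over k from 0 to n of (q^{-3n}; q^3)_k * (x;q)_k (q^2/x;q)_k / ((q;q)_k (-q;q)_k (q^{3/2};q)_k (-q^{3/2};q)_k (q^{-1-3n};q)_k) * q^k equals ((q^2 x; q^3)_n (q^4/x; q^3)_n) / ((q^2; q^3)_n (q^4; q^3)_n). (q-analogue of Gosper's second identity, due to Chu.) -/
/-- q-Pochhammer symbol `(a; q)_k`. -/
noncomputable def qpoch (a q : ℂ) (k : ℕ) : ℂ := ∏ j ∈ Finset.range k, (1 - a * q ^ j)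

/-!
Since `(q;q)_k (-q;q)_k (q^{3/2};q)_k (-q^{3/2};q)_k = (q^2;q^2)_k (q^3;q^2)_k`, the square root
disappears. After multiplying the `k`-th summand by `x^n q^{(1+3n)n} (q^2;q)_{2n} (q^{-1-3n};q)_n`
and the right-hand side by `x^n`, every Pochhammer symbol becomes a product `∏ (a - b q^j)` of
polynomials in `q` and `x`, and the identity becomes a polynomial identity. It is proved by
induction on `n` with a Zeilberger certificate: the summands `t(n, k)` satisfy
`t(n+1, k) c_n = b_n (α_n t(n, k) + G(n, k) - G(n, k+1))`, and the `G`-terms telescope.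
Checking the certificate requires cancelling factors `q^a - q^b` (`a ≠ b`), so it is done in a
domain in which `q` has pairwise distinct powers, such as `ℤ[q, x]`, whence it specialises to
every commutative ring.
-/

open Finset

namespace QGosper

variable {A : Type*} [CommRing A]

/-- `hpoch a b q (range k) = a^k (b/a; q)_k`. -/
def hpoch (a b q : A) (s : Finset ℕ) : A := ∏ j ∈ s, (a - b * q ^ j)

section hpoch

variable (a b q : A)

@[simp] lemma hpoch_empty : hpoch a b q ∅ = 1 := prod_empty

lemma hpoch_range_succ (k : ℕ) :
    hpoch a b q (range (k + 1)) = hpoch a b q (range k) * (a - b * q ^ k) :=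
  prod_range_succ _ _

lemma hpoch_Ico_succ_top {m k : ℕ} (h : m ≤ k) :
    hpoch a b q (Ico m (k + 1)) = hpoch a b q (Ico m k) * (a - b * q ^ k) :=
  prod_Ico_succ_top h _

lemma hpoch_Ico_eq_mul_Ico_succ {m k : ℕ} (h : m < k) :
    hpoch a b q (Ico m k) = (a - b * q ^ m) * hpoch a b q (Ico (m + 1) k) :=
  prod_eq_prod_Ico_succ_bot h _

lemma hpoch_range_mul_Ico {m k : ℕ} (h : m ≤ k) :
    hpoch a b q (range m) * hpoch a b q (Ico m k) = hpoch a b q (range k) := by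
  rw [range_eq_Ico, range_eq_Ico]
  exact prod_Ico_consecutive _ (Nat.zero_le m) h

lemma map_hpoch {B : Type*} [CommRing B] (f : A →+* B) (s : Finset ℕ) :
    f (hpoch a b q s) = hpoch (f a) (f b) (f q) s := by
  simp [hpoch, map_prod]

end hpoch

lemma hpoch_pow_range_succ (p : A) (n : ℕ) : hpoch (p ^ n) 1 p (range (n + 1)) = 0 :=
  prod_eq_zero (self_mem_range_succ n) (by ring)

lemma hpoch_mul_range_mul_sub (c p : A) (k : ℕ) :
    hpoch (c * p) 1 p (range k) * (c * p - p ^ k) =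
      (c * p - 1) * p ^ k * hpoch c 1 p (range k) := by
  induction k with
  | zero => simp
  | succ k ih =>
    rw [hpoch_range_succ, hpoch_range_succ]
    linear_combination (c * p - p ^ (k + 1)) * ih

lemma hpoch_mul_cube_range_mul (c p : A) (k : ℕ) :
    hpoch (c * p ^ 3) 1 p (range k) *
        ((c * p - p ^ k) * (c * p ^ 2 - p ^ k) * (c * p ^ 3 - p ^ k)) =
      p ^ (3 * k) * hpoch c 1 p (range k) * ((c * p - 1) * (c * p ^ 2 - 1) * (c * p ^ 3 - 1)) := by
  induction k with
  | zero => simp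
  | succ k ih =>
    rw [hpoch_range_succ, hpoch_range_succ]
    linear_combination p ^ 3 * (c - p ^ k) * ih

lemma hpoch_mul_cube_Ico_mul (c p : A) {k u v : ℕ} (hu : k ≤ u) (hv : k ≤ v) :
    hpoch (c * p ^ 3) 1 p (Ico k u) * hpoch c 1 p (range v) *
        ((c * p - 1) * (c * p ^ 2 - 1) * (c * p ^ 3 - 1)) * p ^ (3 * k) =
      hpoch (c * p ^ 3) 1 p (range u) *
        ((c * p - p ^ k) * (c * p ^ 2 - p ^ k) * (c * p ^ 3 - p ^ k)) * hpoch c 1 p (Ico k v) := by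
  rw [← hpoch_range_mul_Ico _ _ _ hu, ← hpoch_range_mul_Ico _ _ _ hv]
  linear_combination -(hpoch (c * p ^ 3) 1 p (Ico k u) * hpoch c 1 p (Ico k v)) *
    hpoch_mul_cube_range_mul c p k

/-- `denom q n (range k)` is the denominator of the `k`-th summand times `q^{(1+3n)k}`
(`denom_range_eq`). -/
def denom (q : A) (n : ℕ) (s : Finset ℕ) : A :=
  hpoch 1 (q ^ 2) (q ^ 2) s * hpoch 1 (q ^ 3) (q ^ 2) s * hpoch (q ^ (1 + 3 * n)) 1 q s

/-- The `k`-th summand times `x^n * denom q n (range n)` (`summand_eq`). -/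
def term (q x : A) (n k : ℕ) : A :=
  q ^ (2 * k) * hpoch (q ^ (3 * n)) 1 (q ^ 3) (range k) * hpoch 1 x q (range k) *
    hpoch x (q ^ 2) q (range k) * x ^ (n - k) * denom q n (Ico k n)

/-- The Zeilberger certificate of `term` (`term_succ_mul_eq`). -/
def cert (q x : A) (n : ℕ) : ℕ → A
  | 0 => 0
  | k + 1 => q ^ (3 * n + 2 + k) * hpoch (q ^ (3 * n)) 1 (q ^ 3) (range k) *
      hpoch 1 x q (range (k + 1)) * hpoch x (q ^ 2) q (range (k + 1)) * x ^ (n - k) *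
      denom q n (Ico k n)

section

variable (q x : A) (n : ℕ)

lemma denom_range_mul_Ico {k : ℕ} (hk : k ≤ n) :
    denom q n (range k) * denom q n (Ico k n) = denom q n (range n) := by
  simp only [denom, ← hpoch_range_mul_Ico _ _ _ hk]
  ring

lemma denom_Ico_eq_mul_Ico_succ {k : ℕ} (hk : k < n) :
    denom q n (Ico k n) = (1 - q ^ (2 * k + 2)) * (1 - q ^ (2 * k + 3)) *
      (q ^ (1 + 3 * n) - q ^ k) * denom q n (Ico (k + 1) n) := by
  simp only [denom, hpoch_Ico_eq_mul_Ico_succ _ _ _ hk]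
  ring

lemma hpoch_mul_hpoch_Ico_succ_top {k : ℕ} (hk : k ≤ n) :
    hpoch 1 (q ^ 2) (q ^ 2) (Ico k (n + 1)) * hpoch 1 (q ^ 3) (q ^ 2) (Ico k (n + 1)) =
      hpoch 1 (q ^ 2) (q ^ 2) (Ico k n) * hpoch 1 (q ^ 3) (q ^ 2) (Ico k n) *
        ((1 - q ^ (2 * n + 2)) * (1 - q ^ (2 * n + 3))) := by
  rw [hpoch_Ico_succ_top _ _ _ hk, hpoch_Ico_succ_top _ _ _ hk]
  ring

lemma term_succ_eq_zero : term q x n (n + 1) = 0 := by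
  simp only [term, pow_mul q 3 n, hpoch_pow_range_succ, mul_zero, zero_mul]

lemma cert_add_two_eq_zero : cert q x n (n + 2) = 0 := by
  simp only [cert, pow_mul q 3 n, hpoch_pow_range_succ, mul_zero, zero_mul]

lemma term_succ_succ :
    term q x (n + 1) (n + 1) = q ^ (3 * n + 2) * (q ^ (3 * n + 3) - 1) * (1 - x * q ^ n) *
      (x - q ^ (n + 2)) * term q x n n := by
  have hW := hpoch_mul_range_mul_sub (q ^ (3 * n)) (q ^ 3) n
  rw [← pow_add, show 3 * n + 3 = 3 * (n + 1) by ring] at hW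
  simp only [term, denom, Nat.sub_self, Ico_self, hpoch_empty, hpoch_range_succ]
  linear_combination q ^ (2 * n + 2) * hpoch 1 x q (range n) * hpoch x (q ^ 2) q (range n) *
    (1 - x * q ^ n) * (x - q ^ 2 * q ^ n) * hW

lemma cert_succ_mul (k : ℕ) :
    cert q x n (k + 1) * q ^ (2 * k) =
      q ^ (3 * n + 2 + k) * (1 - x * q ^ k) * (x - q ^ (k + 2)) * term q x n k := by
  simp only [cert, term, hpoch_range_succ]
  ring

lemma cert_succ_mul_of_lt {k : ℕ} (hk : k < n) :
    cert q x n (k + 1) * (q ^ (2 * k + 2) * (q ^ (3 * n) - q ^ (3 * k))) =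
      q ^ (3 * n + 2 + k) * x * (1 - q ^ (2 * k + 2)) * (1 - q ^ (2 * k + 3)) *
        (q ^ (1 + 3 * n) - q ^ k) * term q x n (k + 1) := by
  simp only [cert, term, hpoch_range_succ, denom_Ico_eq_mul_Ico_succ q n hk,
    show n - k = n - (k + 1) + 1 by omega, pow_succ]
  ring

end

lemma ne_zero_of_injective_pow {M : Type*} [MonoidWithZero M] {q : M}
    (hq : Function.Injective (q ^ · : ℕ → M)) : q ≠ 0 := by
  rintro rfl
  exact absurd (hq (show (0 : M) ^ 1 = 0 ^ 2 by simp)) (by norm_num)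

lemma pow_sub_pow_ne_zero {R : Type*} [Ring R] {q : R}
    (hq : Function.Injective (q ^ · : ℕ → R)) {a b : ℕ} (h : a ≠ b) :
    q ^ a - q ^ b ≠ 0 :=
  sub_ne_zero.2 (hq.ne h)

lemma pow_sub_one_ne_zero {R : Type*} [Ring R] {q : R}
    (hq : Function.Injective (q ^ · : ℕ → R)) {a : ℕ} (h : a ≠ 0) : q ^ a - 1 ≠ 0 := by
  simpa using pow_sub_pow_ne_zero hq h

section Domain

variable [IsDomain A] {q : A} (x : A) (n : ℕ)

lemma term_succ_mul (hq : Function.Injective (q ^ · : ℕ → A)) {k : ℕ} (hk : k ≤ n) :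
    term q x (n + 1) k * (hpoch (q ^ (1 + 3 * n)) 1 q (range n) * ((q ^ (3 * n + 3) - q ^ (3 * k)) *
        ((q ^ (2 + 3 * n) - 1) * (q ^ (3 + 3 * n) - 1) * (q ^ (4 + 3 * n) - 1)))) =
      x * ((1 - q ^ (2 * n + 2)) * (1 - q ^ (2 * n + 3))) * (q ^ (3 * n + 3) - 1) *
        hpoch (q ^ (1 + 3 * (n + 1))) 1 q (range (n + 1)) *
        ((q ^ (2 + 3 * n) - q ^ k) * (q ^ (3 + 3 * n) - q ^ k) * (q ^ (4 + 3 * n) - q ^ k)) *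
        term q x n k := by
  have hW := hpoch_mul_range_mul_sub (q ^ (3 * n)) (q ^ 3) k
  have hZ := hpoch_mul_cube_Ico_mul (q ^ (1 + 3 * n)) q (u := n + 1) (by omega) hk
  rw [← pow_add, show 3 * n + 3 = 3 * (n + 1) by ring] at hW
  rw [← pow_add, show 1 + 3 * n + 3 = 1 + 3 * (n + 1) by ring] at hZ
  simp only [term, denom]
  rw [show n + 1 - k = n - k + 1 by omega, pow_succ x, hpoch_mul_hpoch_Ico_succ_top q n hk]
  apply mul_right_cancel₀ (pow_ne_zero (3 * k) (ne_zero_of_injective_pow hq))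
  linear_combination
    (q ^ (2 * k) * hpoch 1 x q (range k) * hpoch x (q ^ 2) q (range k) * x ^ (n - k) * x *
      hpoch 1 (q ^ 2) (q ^ 2) (Ico k n) * hpoch 1 (q ^ 3) (q ^ 2) (Ico k n) *
      ((1 - q ^ (2 * n + 2)) * (1 - q ^ (2 * n + 3)))) *
    (hpoch (q ^ (1 + 3 * (n + 1))) 1 q (Ico k (n + 1)) * hpoch (q ^ (1 + 3 * n)) 1 q (range n) *
        ((q ^ (2 + 3 * n) - 1) * (q ^ (3 + 3 * n) - 1) * (q ^ (4 + 3 * n) - 1)) * q ^ (3 * k) * hW +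
      (q ^ (3 * n + 3) - 1) * q ^ (3 * k) * hpoch (q ^ (3 * n)) 1 (q ^ 3) (range k) * hZ)

lemma hpoch_range_succ_mul (hq : Function.Injective (q ^ · : ℕ → A)) :
    hpoch (q ^ (1 + 3 * (n + 1))) 1 q (range (n + 1)) *
        ((1 - q ^ (2 * n + 2)) * (1 - q ^ (2 * n + 3))) =
      q ^ n * ((q ^ (3 * n + 3) - 1) * (1 - q ^ (2 + 3 * n)) * (1 - q ^ (4 + 3 * n))) *
        hpoch (q ^ (1 + 3 * n)) 1 q (range n) := by
  have hZ := hpoch_mul_cube_Ico_mul (q ^ (1 + 3 * n)) q (k := n) (u := n + 1) (v := n)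
    (by omega) le_rfl
  rw [← pow_add, show 1 + 3 * n + 3 = 1 + 3 * (n + 1) by ring] at hZ
  simp only [hpoch_Ico_succ_top _ _ _ le_rfl, Ico_self, hpoch_empty] at hZ
  apply mul_left_cancel₀ (mul_ne_zero
    (pow_sub_pow_ne_zero hq (show 1 + 3 * (n + 1) ≠ n by omega))
    (pow_ne_zero (2 * n) (ne_zero_of_injective_pow hq)))
  linear_combination -hZ

lemma term_succ_mul_eq_of_le (hq : Function.Injective (q ^ · : ℕ → A)) {k : ℕ}
    (hk : k ≤ n) :
    term q x (n + 1) k *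
        (hpoch (q ^ (1 + 3 * n)) 1 q (range n) * ((1 - q ^ (2 + 3 * n)) * (1 - q ^ (4 + 3 * n)))) =
      (1 - q ^ (2 * n + 2)) * (1 - q ^ (2 * n + 3)) *
        hpoch (q ^ (1 + 3 * (n + 1))) 1 q (range (n + 1)) *
        ((1 - q ^ (2 + 3 * n) * x) * (x - q ^ (4 + 3 * n)) * term q x n k + cert q x n k -
          cert q x n (k + 1)) := by
  have hD : (q ^ (3 * n + 3) - q ^ (3 * k)) *
      ((q ^ (2 + 3 * n) - 1) * (q ^ (3 + 3 * n) - 1) * (q ^ (4 + 3 * n) - 1)) ≠ 0 := by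
    refine mul_ne_zero (pow_sub_pow_ne_zero hq (by omega)) (mul_ne_zero (mul_ne_zero ?_ ?_) ?_) <;>
      exact pow_sub_one_ne_zero hq (by omega)
  have hR := term_succ_mul x n hq hk
  rcases k with _ | k
  · rw [show cert q x n 0 = 0 from rfl]
    apply mul_left_cancel₀ hD
    linear_combination (1 - q ^ (2 + 3 * n)) * (1 - q ^ (4 + 3 * n)) * hR +
      (1 - q ^ (2 * n + 2)) * (1 - q ^ (2 * n + 3)) *
        hpoch (q ^ (1 + 3 * (n + 1))) 1 q (range (n + 1)) * ((q ^ (3 * n + 3) - 1) *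
          ((q ^ (2 + 3 * n) - 1) * (q ^ (3 + 3 * n) - 1) * (q ^ (4 + 3 * n) - 1))) *
        cert_succ_mul q x n 0
  · apply mul_left_cancel₀ (mul_ne_zero hD (mul_ne_zero
      (pow_ne_zero (2 * (k + 1)) (ne_zero_of_injective_pow hq))
      (pow_sub_pow_ne_zero hq (show 3 * n ≠ 3 * k by omega))))
    linear_combination (1 - q ^ (2 + 3 * n)) * (1 - q ^ (4 + 3 * n)) * q ^ (2 * (k + 1)) *
        (q ^ (3 * n) - q ^ (3 * k)) * hR +
      (1 - q ^ (2 * n + 2)) * (1 - q ^ (2 * n + 3)) *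
        hpoch (q ^ (1 + 3 * (n + 1))) 1 q (range (n + 1)) * ((q ^ (3 * n + 3) - q ^ (3 * (k + 1))) *
          ((q ^ (2 + 3 * n) - 1) * (q ^ (3 + 3 * n) - 1) * (q ^ (4 + 3 * n) - 1))) *
        ((q ^ (3 * n) - q ^ (3 * k)) * cert_succ_mul q x n (k + 1) -
          cert_succ_mul_of_lt q x n (k := k) (by omega))

lemma term_succ_succ_mul_eq (hq : Function.Injective (q ^ · : ℕ → A)) :
    term q x (n + 1) (n + 1) *
        (hpoch (q ^ (1 + 3 * n)) 1 q (range n) * ((1 - q ^ (2 + 3 * n)) * (1 - q ^ (4 + 3 * n)))) =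
      (1 - q ^ (2 * n + 2)) * (1 - q ^ (2 * n + 3)) *
        hpoch (q ^ (1 + 3 * (n + 1))) 1 q (range (n + 1)) * cert q x n (n + 1) := by
  rw [term_succ_succ]
  apply mul_left_cancel₀ (pow_ne_zero (2 * n) (ne_zero_of_injective_pow hq))
  linear_combination -((1 - q ^ (2 * n + 2)) * (1 - q ^ (2 * n + 3)) *
      hpoch (q ^ (1 + 3 * (n + 1))) 1 q (range (n + 1))) * cert_succ_mul q x n n -
    q ^ (4 * n + 2) * (1 - x * q ^ n) * (x - q ^ (n + 2)) * term q x n n *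
      hpoch_range_succ_mul n hq

lemma term_succ_mul_eq (hq : Function.Injective (q ^ · : ℕ → A)) {k : ℕ} (hk : k ≤ n + 1) :
    term q x (n + 1) k *
        (hpoch (q ^ (1 + 3 * n)) 1 q (range n) * ((1 - q ^ (2 + 3 * n)) * (1 - q ^ (4 + 3 * n)))) =
      (1 - q ^ (2 * n + 2)) * (1 - q ^ (2 * n + 3)) *
        hpoch (q ^ (1 + 3 * (n + 1))) 1 q (range (n + 1)) *
        ((1 - q ^ (2 + 3 * n) * x) * (x - q ^ (4 + 3 * n)) * term q x n k + cert q x n k -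
          cert q x n (k + 1)) := by
  rcases Nat.lt_or_ge n k with hnk | hkn
  · obtain rfl : k = n + 1 := by omega
    rw [term_succ_succ_mul_eq x n hq, term_succ_eq_zero, cert_add_two_eq_zero]
    ring
  · exact term_succ_mul_eq_of_le x n hq hkn

lemma sum_term_succ_mul (hq : Function.Injective (q ^ · : ℕ → A)) :
    (∑ k ∈ range (n + 2), term q x (n + 1) k) *
        (hpoch (q ^ (1 + 3 * n)) 1 q (range n) * ((1 - q ^ (2 + 3 * n)) * (1 - q ^ (4 + 3 * n)))) =
      (1 - q ^ (2 * n + 2)) * (1 - q ^ (2 * n + 3)) *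
        hpoch (q ^ (1 + 3 * (n + 1))) 1 q (range (n + 1)) *
        ((1 - q ^ (2 + 3 * n) * x) * (x - q ^ (4 + 3 * n)) *
          ∑ k ∈ range (n + 1), term q x n k) := by
  rw [sum_mul, sum_congr rfl fun k hk => term_succ_mul_eq x n hq (by simp at hk; omega),
    ← mul_sum]
  simp only [add_sub_assoc, sum_add_distrib, sum_range_sub', ← mul_sum, sum_range_succ _ (n + 1),
    term_succ_eq_zero, cert_add_two_eq_zero]
  simp [cert]

lemma sum_term_mul_of_injective (hq : Function.Injective (q ^ · : ℕ → A)) :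
    (∑ k ∈ range (n + 1), term q x n k) *
        (hpoch 1 (q ^ 2) (q ^ 3) (range n) * hpoch 1 (q ^ 4) (q ^ 3) (range n)) =
      hpoch 1 (q ^ 2 * x) (q ^ 3) (range n) * hpoch x (q ^ 4) (q ^ 3) (range n) *
        denom q n (range n) := by
  induction n with
  | zero => simp [term, denom]
  | succ n ih =>
    have hX : hpoch (q ^ (1 + 3 * n)) 1 q (range n) ≠ 0 :=
      prod_ne_zero_iff.2 fun j hj => by
        simpa using pow_sub_pow_ne_zero hq (show 1 + 3 * n ≠ j by simp at hj; omega)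
    apply mul_right_cancel₀ hX
    simp only [denom] at ih ⊢
    rw [hpoch_range_succ 1 (q ^ 2) (q ^ 3), hpoch_range_succ 1 (q ^ 4) (q ^ 3),
      hpoch_range_succ 1 (q ^ 2 * x), hpoch_range_succ x, hpoch_range_succ 1 (q ^ 2) (q ^ 2),
      hpoch_range_succ 1 (q ^ 3) (q ^ 2)]
    linear_combination
      hpoch 1 (q ^ 2) (q ^ 3) (range n) * hpoch 1 (q ^ 4) (q ^ 3) (range n) *
        sum_term_succ_mul x n hq +
      (1 - q ^ (2 * n + 2)) * (1 - q ^ (2 * n + 3)) *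
        hpoch (q ^ (1 + 3 * (n + 1))) 1 q (range (n + 1)) *
        ((1 - q ^ (2 + 3 * n) * x) * (x - q ^ (4 + 3 * n))) * ih

end Domain

lemma map_denom {B : Type*} [CommRing B] (f : A →+* B) (q : A) (n : ℕ) (s : Finset ℕ) :
    f (denom q n s) = denom (f q) n s := by
  simp [denom, map_hpoch]

lemma map_term {B : Type*} [CommRing B] (f : A →+* B) (q x : A) (n k : ℕ) :
    f (term q x n k) = term (f q) (f x) n k := by
  simp [term, map_hpoch, map_denom]

lemma _root_.MvPolynomial.X_pow_injective {σ R : Type*} [CommSemiring R] [Nontrivial R] (i : σ) :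
    Function.Injective (MvPolynomial.X i ^ · : ℕ → MvPolynomial σ R) := by
  intro a b h
  simp only [MvPolynomial.X_pow_eq_monomial] at h
  exact Finsupp.single_injective i (MvPolynomial.monomial_left_injective one_ne_zero h)

theorem sum_term_mul (q x : A) (n : ℕ) :
    (∑ k ∈ range (n + 1), term q x n k) *
        (hpoch 1 (q ^ 2) (q ^ 3) (range n) * hpoch 1 (q ^ 4) (q ^ 3) (range n)) =
      hpoch 1 (q ^ 2 * x) (q ^ 3) (range n) * hpoch x (q ^ 4) (q ^ 3) (range n) *
        denom q n (range n) := by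
  have h := congrArg (MvPolynomial.eval₂Hom (Int.castRingHom A) ![q, x])
    (sum_term_mul_of_injective (MvPolynomial.X 1) n (MvPolynomial.X_pow_injective (R := ℤ) 0))
  simpa only [map_mul, map_sum, map_term, map_hpoch, map_denom, map_one, map_pow,
    MvPolynomial.eval₂Hom_X', Matrix.cons_val_zero, Matrix.cons_val_one] using h

lemma qpoch_eq_hpoch (a q : ℂ) (k : ℕ) : qpoch a q k = hpoch 1 a q (range k) := rfl

lemma qpoch_div_mul_pow {a : ℂ} (ha : a ≠ 0) (b q : ℂ) (k : ℕ) :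
    qpoch (b / a) q k * a ^ k = hpoch a b q (range k) := by
  rw [qpoch, show a ^ k = ∏ _j ∈ range k, a by simp, ← prod_mul_distrib]
  exact prod_congr rfl fun j _ => by field_simp

lemma qpoch_mul_qpoch_neg (a q : ℂ) (k : ℕ) :
    qpoch a q k * qpoch (-a) q k = qpoch (a ^ 2) (q ^ 2) k := by
  rw [qpoch, qpoch, qpoch, ← prod_mul_distrib]
  exact prod_congr rfl fun j _ => by ring

lemma denom_range_eq {q s : ℂ} (hs : s ^ 2 = q) (hq : q ≠ 0) (n k : ℕ) :
    denom q n (range k) = qpoch q q k * qpoch (-q) q k * qpoch (q * s) q k *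
      qpoch (-(q * s)) q k * qpoch (q ^ (-1 - 3 * n : ℤ)) q k * (q ^ (1 + 3 * n)) ^ k := by
  have h3 : (q * s) ^ 2 = q ^ 3 := by rw [mul_pow, hs]; ring
  have hz : q ^ (-1 - 3 * n : ℤ) = 1 / q ^ (1 + 3 * n) := by
    rw [one_div, ← zpow_natCast, ← zpow_neg]; push_cast; ring_nf
  rw [mul_assoc (qpoch q q k * qpoch (-q) q k), qpoch_mul_qpoch_neg, qpoch_mul_qpoch_neg, h3, hz,
    mul_assoc, qpoch_div_mul_pow (pow_ne_zero _ hq), denom, qpoch_eq_hpoch, qpoch_eq_hpoch]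

lemma summand_eq {q x s : ℂ} (hs : s ^ 2 = q) (hq : q ≠ 0) (hx : x ≠ 0) {n k : ℕ}
    (hk : k ≤ n)
    (hdk : qpoch q q k * qpoch (-q) q k * qpoch (q * s) q k * qpoch (-(q * s)) q k *
      qpoch (q ^ (-1 - 3 * n : ℤ)) q k ≠ 0)
    (hdn : denom q n (range n) ≠ 0) :
    qpoch (q ^ (-(3 * n : ℤ))) (q ^ 3) k * (qpoch x q k * qpoch (q ^ 2 / x) q k) /
        (qpoch q q k * qpoch (-q) q k * qpoch (q * s) q k * qpoch (-(q * s)) q k *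
          qpoch (q ^ (-1 - 3 * n : ℤ)) q k) * q ^ k =
      term q x n k / (x ^ n * denom q n (range n)) := by
  have hz : q ^ (-(3 * n : ℤ)) = 1 / q ^ (3 * n) := by
    rw [one_div, ← zpow_natCast, ← zpow_neg]; push_cast; ring_nf
  rw [div_mul_eq_mul_div, div_eq_div_iff hdk (mul_ne_zero (pow_ne_zero n hx) hdn), term,
    ← denom_range_mul_Ico q n hk, denom_range_eq hs hq, ← qpoch_div_mul_pow hx,
    ← qpoch_div_mul_pow (pow_ne_zero (3 * n) hq), ← hz, qpoch_eq_hpoch x,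
    ← pow_mul_pow_sub x hk]
  ring

end QGosper

open QGosper

theorem q_gosper_second (n : ℕ) (q x s : ℂ) (hs : s ^ 2 = q) (hq : q ≠ 0) (hx : x ≠ 0)
    (hden : ∀ k ≤ n,
      qpoch q q k * qpoch (-q) q k * qpoch (q*s) q k * qpoch (-(q*s)) q k *
        qpoch (q ^ (-1 - 3*n : ℤ)) q k ≠ 0)
    (hden2 : qpoch (q^2) (q^3) n * qpoch (q^4) (q^3) n ≠ 0) :
    ∑ k ∈ Finset.range (n+1),
      qpoch (q ^ (-(3*n : ℤ))) (q^3) k * (qpoch x q k * qpoch (q^2/x) q k) /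
        (qpoch q q k * qpoch (-q) q k * qpoch (q*s) q k * qpoch (-(q*s)) q k *
          qpoch (q ^ (-1 - 3*n : ℤ)) q k) * q^k
      = (qpoch (q^2*x) (q^3) n * qpoch (q^4/x) (q^3) n) /
          (qpoch (q^2) (q^3) n * qpoch (q^4) (q^3) n) := by
  have hdn : denom q n (range n) ≠ 0 := by
    rw [denom_range_eq hs hq]
    exact mul_ne_zero (hden n le_rfl) (pow_ne_zero _ (pow_ne_zero _ hq))
  have hB := qpoch_div_mul_pow hx (q ^ 4) (q ^ 3) n
  rw [sum_congr rfl fun k hk => summand_eq hs hq hx (Nat.lt_succ_iff.1 (mem_range.1 hk))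
      (hden k (Nat.lt_succ_iff.1 (mem_range.1 hk))) hdn,
    ← sum_div, div_eq_div_iff (mul_ne_zero (pow_ne_zero n hx) hdn) hden2]
  simp only [qpoch_eq_hpoch] at hB ⊢
  linear_combination
    sum_term_mul q x n - hpoch 1 (q ^ 2 * x) (q ^ 3) (range n) * denom q n (range n) * hB
end

section
/- The infinite series sum over k from 0 to infinity of k! / (3/2)_k * (1/4)^k converges and equals 2*pi/(3*sqrt(3)). -/
/-- Pochhammer symbol (rising factorial) `(a)_k` over the reals. -/
noncomputable def pochR (a : ℝ) (k : ℕ) : ℝ := ∏ j ∈ Finset.range k, (a + j)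

/-!
The Wallis-type integral `∫₀¹ (1 - u²)^k du` equals `k! / (3/2)_k` (integrate by parts), so
`∑ k! / (3/2)_k xᵏ = ∫₀¹ (1 - (1 - u²) x)⁻¹ du` for `|x| < 1` by summing a dominated geometric
series under the integral. At `x = 1/4` the integrand is `4 / (3 + u²)`, whose integral is
`(4 / √3) arctan (1 / √3) = 2π / (3√3)`.
-/

open Real intervalIntegral Nat

lemma pochR_succ (a : ℝ) (k : ℕ) : pochR a (k + 1) = pochR a k * (a + k) :=
  Finset.prod_range_succ _ _

lemma pochR_pos {a : ℝ} (ha : 0 < a) (k : ℕ) : 0 < pochR a k :=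
  Finset.prod_pos fun _ _ => by positivity

lemma integral_one_sub_sq_pow_succ (k : ℕ) :
    (2 * k + 3 : ℝ) * ∫ u in (0 : ℝ)..1, (1 - u ^ 2) ^ (k + 1) =
      (2 * k + 2) * ∫ u in (0 : ℝ)..1, (1 - u ^ 2) ^ k := by
  have hderiv : ∀ u ∈ Set.uIcc (0 : ℝ) 1, HasDerivAt (fun u : ℝ => u * (1 - u ^ 2) ^ (k + 1))
      ((2 * k + 3) * (1 - u ^ 2) ^ (k + 1) - (2 * k + 2) * (1 - u ^ 2) ^ k) u := by
    intro u _
    have hsub : HasDerivAt (fun u : ℝ => 1 - u ^ 2) (-(2 * u)) u := by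
      simpa using (hasDerivAt_pow 2 u).const_sub 1
    have hprod : HasDerivAt (fun u : ℝ => u * (1 - u ^ 2) ^ (k + 1))
        (1 * (1 - u ^ 2) ^ (k + 1) + u * ((k + 1 : ℕ) * (1 - u ^ 2) ^ k * -(2 * u))) u :=
      (hasDerivAt_id' u).mul (hsub.pow (k + 1))
    convert hprod using 1
    push_cast
    ring
  have hint : ∀ (c : ℝ) (n : ℕ),
      IntervalIntegrable (fun u : ℝ => c * (1 - u ^ 2) ^ n) MeasureTheory.volume 0 1 :=
    fun c n => (by fun_prop : Continuous fun u : ℝ => c * (1 - u ^ 2) ^ n).intervalIntegrable 0 1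
  have h := integral_eq_sub_of_hasDerivAt hderiv ((hint _ _).sub (hint _ _))
  rw [integral_sub (hint _ _) (hint _ _), integral_const_mul, integral_const_mul] at h
  norm_num at h
  linarith

lemma integral_one_sub_sq_pow (k : ℕ) :
    ∫ u in (0 : ℝ)..1, (1 - u ^ 2) ^ k = k ! / pochR (3 / 2) k := by
  induction k with
  | zero => simp [pochR]
  | succ k ih =>
    have h := integral_one_sub_sq_pow_succ k
    rw [ih] at h
    have hp := pochR_pos (by norm_num : (0 : ℝ) < 3 / 2) k
    rw [pochR_succ, factorial_succ, cast_mul, eq_div_iff (by positivity)]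
    field_simp at h ⊢
    push_cast
    linarith

lemma abs_one_sub_sq_le_one {α : Type*} [CommRing α] [LinearOrder α] [IsStrictOrderedRing α]
    {a : α} (ha : |a| ≤ 1) : |1 - a ^ 2| ≤ 1 := by
  have h := (sq_le_one_iff_abs_le_one a).mpr ha
  rw [abs_le]
  constructor <;> nlinarith [sq_nonneg a]

theorem hasSum_factorial_div_pochR_mul_pow {x : ℝ} (hx : |x| < 1) :
    HasSum (fun k : ℕ => (k ! : ℝ) / pochR (3 / 2) k * x ^ k)
      (∫ u in (0 : ℝ)..1, (1 - (1 - u ^ 2) * x)⁻¹) := by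
  have hq : ∀ u ∈ Set.uIoc (0 : ℝ) 1, |(1 - u ^ 2) * x| ≤ |x| := by
    intro u hu
    rw [Set.uIoc_of_le zero_le_one] at hu
    rw [abs_mul]
    exact mul_le_of_le_one_left (abs_nonneg x)
      (abs_one_sub_sq_le_one (abs_le.mpr ⟨by linarith [hu.1], hu.2⟩))
  simp_rw [← integral_one_sub_sq_pow, ← integral_mul_const, ← mul_pow]
  refine hasSum_integral_of_dominated_convergence (fun k _ => |x| ^ k)
    (fun k => (by fun_prop : Continuous fun u : ℝ => ((1 - u ^ 2) * x) ^ k).aestronglyMeasurable)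
    (fun k => .of_forall fun u hu => ?_)
    (.of_forall fun _ _ => summable_geometric_of_lt_one (abs_nonneg x) hx)
    intervalIntegrable_const (.of_forall fun u hu => ?_)
  · rw [norm_pow, Real.norm_eq_abs]
    exact pow_le_pow_left₀ (abs_nonneg _) (hq u hu) k
  · exact hasSum_geometric_of_abs_lt_one ((hq u hu).trans_lt hx)

theorem pi_series :
    HasSum (fun k : ℕ => (Nat.factorial k : ℝ) / pochR (3/2) k * (1/4 : ℝ)^k)
      (2 * Real.pi / (3 * Real.sqrt 3)) := by
  have h := hasSum_factorial_div_pochR_mul_pow (x := 1 / 4) (by norm_num [abs_of_pos])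
  have hval : ∀ u : ℝ, (1 - (1 - u ^ 2) * (1 / 4))⁻¹ = 4 * (√3 ^ 2 + u ^ 2)⁻¹ := by
    intro u
    rw [sq_sqrt (by norm_num), show 1 - (1 - u ^ 2) * (1 / 4) = (3 + u ^ 2) / 4 by ring, inv_div,
      div_eq_mul_inv]
  simp_rw [hval, integral_const_mul, integral_inv_sq_add_sq (by positivity : √3 ≠ 0)] at h
  convert h using 1
  rw [zero_div, arctan_zero, one_div, arctan_inv_sqrt_three]
  field_simp
  ring
end
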